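/- (Type D_n, part (i) of the proposition on fundamental weights.) Let n ≥ 4. The minimum over k ∈ {1, …, n} of ℓ_{ϖ₁}⁻(ϖ_k) equals n − 1 and is attained exactly at k = n−1 and k = n: ℓ_{ϖ₁}⁻(ϖ_{n−1}) = n − 1, realized by w = s₁ ∘ s₂ ∘ ⋯ ∘ s_{n−1} (with s_{n−1} applied first), and ℓ_{ϖ₁}⁻(ϖ_n) = n − 1, realized by w = s₁ ∘ s₂ ∘ ⋯ ∘ s_{n−2} ∘ s_n (with s_n applied first). -/

import Mathlib

/-! A potential gives the lower bounds. An entry `x` at (`0`-based) position `i` costs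
`negCost n i x`, an underestimate of the number of simple reflections needed to turn it into a
negative first coordinate. A simple reflection moves an entry at most one position and changes
signs only while swapping the last two positions, so the least cost of the entries of a vector
drops by at most one per reflection; and `⟪w λ, ϖ₁⟫ < 0` says that the first entry of `w λ` is
negative, i.e. of cost `0`. Every entry of every `ϖ_k` costs at least `n - 1`, and at least `n`
when `k ≤ n - 2`. The words realising `n - 1` carry the last entry of `ϖ_{n-1}` (which is
negative), resp. of `sₙ ϖₙ`, to the front. -/

open scoped RealInnerProductSpace

/-- The `j`-th simple reflection of type `Dₙ` (`1 ≤ j ≤ n`), acting on `ℝⁿ`: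
for `j < n` it transposes the coordinates numbered `j` and `j+1` (in `1`-based numbering),
and for `j = n` it sends `e_{n−1}` to `−eₙ` and `eₙ` to `−e_{n−1}`. -/
noncomputable def sD (n j : ℕ) : EuclideanSpace ℝ (Fin n) → EuclideanSpace ℝ (Fin n) :=
  fun v => WithLp.toLp 2 (fun i : Fin n =>
    if j = n then
      (if (i : ℕ) + 2 = n then -(v ⟨(n - 1) % n, Nat.mod_lt _ i.pos⟩)
       else if (i : ℕ) + 1 = n then -(v ⟨(n - 2) % n, Nat.mod_lt _ i.pos⟩)
       else v i)
    else if (i : ℕ) + 1 = j then v ⟨j % n, Nat.mod_lt _ i.pos⟩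
    else if (i : ℕ) = j then v ⟨(j - 1) % n, Nat.mod_lt _ i.pos⟩
    else v i)

/-- The composition of the simple reflections indexed by the entries of `l`
(the last entry of the list is applied first). -/
noncomputable def compD (n : ℕ) (l : List ℕ) :
    EuclideanSpace ℝ (Fin n) → EuclideanSpace ℝ (Fin n) :=
  l.foldr (fun j g => sD n j ∘ g) id

/-- The fundamental weights of type `Dₙ` (`1 ≤ j ≤ n`): `ϖⱼ = e₁ + ⋯ + eⱼ` for `j ≤ n−2`,
`ϖ_{n−1} = (e₁ + ⋯ + e_{n−1} − eₙ)/2` and `ϖₙ = (e₁ + ⋯ + e_{n−1} + eₙ)/2`. -/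
noncomputable def wtD (n j : ℕ) : EuclideanSpace ℝ (Fin n) :=
  if j + 1 = n then WithLp.toLp 2 (fun i : Fin n => if (i : ℕ) + 1 = n then -(1 / 2 : ℝ) else 1 / 2)
  else if j = n then WithLp.toLp 2 (fun _ : Fin n => (1 / 2 : ℝ))
  else WithLp.toLp 2 (fun i : Fin n => if (i : ℕ) < j then (1 : ℝ) else 0)

lemma exists_sD_apply {n : ℕ} (hn : 2 ≤ n) (j : ℕ) (v : EuclideanSpace ℝ (Fin n)) (i : Fin n) :
    ∃ i' : Fin n, (sD n j v i = v i' ∧ (i' : ℕ) ≤ i + 1) ∨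
      (sD n j v i = -v i' ∧
        ((i' : ℕ) + 1 = n ∧ (i : ℕ) + 2 = n ∨ (i' : ℕ) + 2 = n ∧ (i : ℕ) + 1 = n)) := by
  have hi := i.isLt
  by_cases hjn : j = n
  · by_cases h2 : (i : ℕ) + 2 = n
    · refine ⟨⟨n - 1, by omega⟩, .inr ⟨?_, .inl ⟨show n - 1 + 1 = n by omega, h2⟩⟩⟩
      simp [sD, hjn, h2, Nat.mod_eq_of_lt (show n - 1 < n by omega)]
    by_cases h1 : (i : ℕ) + 1 = n
    · refine ⟨⟨n - 2, by omega⟩, .inr ⟨?_, .inr ⟨show n - 2 + 2 = n by omega, h1⟩⟩⟩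
      simp [sD, hjn, h1, h2, Nat.mod_eq_of_lt (show n - 2 < n by omega)]
    exact ⟨i, .inl ⟨by simp [sD, hjn, h1, h2], by omega⟩⟩
  by_cases hA : (i : ℕ) + 1 = j
  · refine ⟨⟨j, by omega⟩, .inl ⟨?_, show j ≤ i + 1 by omega⟩⟩
    simp [sD, hjn, hA, Nat.mod_eq_of_lt (show j < n by omega)]
  by_cases hB : (i : ℕ) = j
  · refine ⟨⟨j - 1, by omega⟩, .inl ⟨?_, show j - 1 ≤ i + 1 by omega⟩⟩
    simp [sD, hjn, hB, Nat.mod_eq_of_lt (show j - 1 < n by omega)]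
  exact ⟨i, .inl ⟨by simp [sD, hjn, hA, hB], by omega⟩⟩

lemma sD_succ_apply {n b : ℕ} (hb : b + 1 < n) (v : EuclideanSpace ℝ (Fin n)) :
    sD n (b + 1) v ⟨b, by omega⟩ = v ⟨b + 1, hb⟩ := by
  simp [sD, show b + 1 ≠ n by omega, Nat.mod_eq_of_lt hb]

lemma sD_self_apply {n : ℕ} (hn : 2 ≤ n) (v : EuclideanSpace ℝ (Fin n)) :
    sD n n v ⟨n - 2, by omega⟩ = -v ⟨n - 1, by omega⟩ := by
  simp [sD, show n - 2 + 2 = n by omega, Nat.mod_eq_of_lt (show n - 1 < n by omega)]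

lemma compD_cons (n j : ℕ) (l : List ℕ) : compD n (j :: l) = sD n j ∘ compD n l := rfl

lemma compD_append (n : ℕ) (l₁ l₂ : List ℕ) :
    compD n (l₁ ++ l₂) = compD n l₁ ∘ compD n l₂ := by
  induction l₁ with
  | nil => rfl
  | cons j l ih => rw [List.cons_append, compD_cons, compD_cons, ih, Function.comp_assoc]

lemma compD_range_succ_apply_zero {n b : ℕ} (hb : b < n) (v : EuclideanSpace ℝ (Fin n)) :
    compD n ((List.range b).map (· + 1)) v ⟨0, by omega⟩ = v ⟨b, hb⟩ := by
  induction b generalizing v with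
  | zero => rfl
  | succ b ih =>
    rw [List.range_succ, List.map_append, compD_append, Function.comp_apply, ih (by omega)]
    exact sD_succ_apply hb v

lemma wtD_one (n : ℕ) (hn : 3 ≤ n) : wtD n 1 = EuclideanSpace.single ⟨0, by omega⟩ 1 := by
  ext i
  simp [wtD, Fin.ext_iff, show 1 + 1 ≠ n by omega, show 1 ≠ n by omega]

lemma inner_wtD_one (n : ℕ) (hn : 3 ≤ n) (v : EuclideanSpace ℝ (Fin n)) :
    ⟪v, wtD n 1⟫ = v ⟨0, by omega⟩ := by
  simp [wtD_one n hn, EuclideanSpace.inner_single_right]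

lemma wtD_apply_nonneg (n k : ℕ) {i : Fin n} (hi : (i : ℕ) + 1 ≠ n) : 0 ≤ wtD n k i := by
  simp only [wtD]
  split_ifs <;> simp [hi]; split_ifs <;> norm_num

lemma wtD_apply_of_add_two_le (n k : ℕ) (hk : k + 2 ≤ n) (i : Fin n) :
    wtD n k i = if (i : ℕ) < k then 1 else 0 := by
  simp [wtD, show k + 1 ≠ n by omega, show k ≠ n by omega]

/-- A lower bound for the number of simple reflections needed to bring the entry `x`, sitting at
(`0`-based) position `i`, to position `0` with a negative sign: a negative entry must travel `i`
steps, a positive one must first be negated by `sₙ`, which acts only on the last two positions,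
and a zero entry never becomes negative. -/
noncomputable def negCost (n i : ℕ) (x : ℝ) : ℕ :=
  if x < 0 then i else if 0 < x ∧ i + 1 = n then n - 1 else n

lemma negCost_le_of_le_add_one (n : ℕ) {a b : ℕ} (x : ℝ) (hab : a ≤ b + 1) :
    negCost n a x ≤ negCost n b x + 1 := by
  unfold negCost
  split_ifs <;> omega

lemma negCost_le_neg_of_last_two {n a b : ℕ} (x : ℝ)
    (hab : a + 1 = n ∧ b + 2 = n ∨ a + 2 = n ∧ b + 1 = n) :
    negCost n a x ≤ negCost n b (-x) + 1 := by
  rcases lt_trichotomy x 0 with hx | rfl | hx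
  · have : ¬ -x < 0 := by linarith
    simp only [negCost, hx, this, if_true, if_false, neg_pos, not_lt_of_gt hx, false_and]
    split_ifs <;> omega
  · simp only [negCost, neg_zero, lt_irrefl, false_and, if_false]
    omega
  · have : -x < 0 := by linarith
    simp only [negCost, this, if_true, not_lt_of_gt hx, hx, true_and, if_false]
    split_ifs <;> omega

lemma exists_negCost_le_sD {n : ℕ} (hn : 2 ≤ n) (j : ℕ) (v : EuclideanSpace ℝ (Fin n)) (i : Fin n) :
    ∃ i' : Fin n, negCost n i' (v i') ≤ negCost n i (sD n j v i) + 1 := by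
  obtain ⟨i', ⟨hv, hle⟩ | ⟨hv, hlast⟩⟩ := exists_sD_apply hn j v i
  · exact ⟨i', hv ▸ negCost_le_of_le_add_one n _ hle⟩
  · exact ⟨i', hv ▸ negCost_le_neg_of_last_two _ hlast⟩

lemma le_negCost_compD_add_length {n : ℕ} (hn : 2 ≤ n) {B : ℕ} {v : EuclideanSpace ℝ (Fin n)}
    (hv : ∀ i : Fin n, B ≤ negCost n i (v i)) (l : List ℕ) (i : Fin n) :
    B ≤ negCost n i (compD n l v i) + l.length := by
  induction l generalizing i with
  | nil => exact hv i
  | cons j l ih =>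
    obtain ⟨i', hi'⟩ := exists_negCost_le_sD hn j (compD n l v) i
    have := ih i'
    rw [compD_cons, Function.comp_apply, List.length_cons]
    omega

lemma le_length_of_inner_compD_neg (n : ℕ) (hn : 3 ≤ n) {B : ℕ} {v : EuclideanSpace ℝ (Fin n)}
    (hv : ∀ i : Fin n, B ≤ negCost n i (v i)) (l : List ℕ) (hl : ⟪compD n l v, wtD n 1⟫ < 0) :
    B ≤ l.length := by
  rw [inner_wtD_one n hn] at hl
  have := le_negCost_compD_add_length (by omega) hv l ⟨0, by omega⟩
  simp only [negCost, hl, if_true] at this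
  omega

lemma sub_one_le_negCost_wtD (n k : ℕ) (i : Fin n) : n - 1 ≤ negCost n i (wtD n k i) := by
  rcases eq_or_ne ((i : ℕ) + 1) n with hi | hi
  · unfold negCost
    split_ifs <;> omega
  · have := wtD_apply_nonneg n k hi
    unfold negCost
    split_ifs <;> first | omega | linarith

lemma le_negCost_wtD (n k : ℕ) (hk : k + 2 ≤ n) (i : Fin n) : n ≤ negCost n i (wtD n k i) := by
  rw [wtD_apply_of_add_two_le n k hk, negCost]
  split_ifs <;> norm_num at *; omega

lemma inner_compD_wtD_sub_one_neg (n : ℕ) (hn : 3 ≤ n) :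
    ⟪compD n ((List.range (n - 1)).map (· + 1)) (wtD n (n - 1)), wtD n 1⟫ < 0 := by
  rw [inner_wtD_one n hn, compD_range_succ_apply_zero (by omega)]
  simp [wtD, show n - 1 + 1 = n by omega]

lemma inner_compD_wtD_self_neg (n : ℕ) (hn : 3 ≤ n) :
    ⟪compD n ((List.range (n - 2)).map (· + 1) ++ [n]) (wtD n n), wtD n 1⟫ < 0 := by
  rw [inner_wtD_one n hn, compD_append, Function.comp_apply,
    compD_range_succ_apply_zero (by omega), compD_cons, Function.comp_apply, sD_self_apply]
  · simp [wtD, compD]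
  · omega

theorem statement13 (n : ℕ) (hn : 4 ≤ n) :
    (∀ k, 1 ≤ k → k ≤ n → ∀ l : List ℕ, (∀ m ∈ l, 1 ≤ m ∧ m ≤ n) →
        ⟪compD n l (wtD n k), wtD n 1⟫ < 0 → n - 1 ≤ l.length) ∧
    IsLeast {k : ℕ | ∃ l : List ℕ, (∀ m ∈ l, 1 ≤ m ∧ m ≤ n) ∧ l.length = k ∧
        ⟪compD n l (wtD n (n - 1)), wtD n 1⟫ < 0} (n - 1) ∧
    IsLeast {k : ℕ | ∃ l : List ℕ, (∀ m ∈ l, 1 ≤ m ∧ m ≤ n) ∧ l.length = k ∧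
        ⟪compD n l (wtD n n), wtD n 1⟫ < 0} (n - 1) ∧
    (∀ k, 1 ≤ k → k ≤ n → k ≠ n - 1 → k ≠ n →
      ∀ l : List ℕ, (∀ m ∈ l, 1 ≤ m ∧ m ≤ n) →
        ⟪compD n l (wtD n k), wtD n 1⟫ < 0 → n - 1 < l.length) ∧
    ⟪compD n ((List.range (n - 1)).map (· + 1)) (wtD n (n - 1)), wtD n 1⟫ < 0 ∧
    ⟪compD n (((List.range (n - 2)).map (· + 1)) ++ [n]) (wtD n n), wtD n 1⟫ < 0 := by
  have lower (k : ℕ) (l : List ℕ) (hl : ⟪compD n l (wtD n k), wtD n 1⟫ < 0) : n - 1 ≤ l.length :=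
    le_length_of_inner_compD_neg n (by omega) (sub_one_le_negCost_wtD n k) l hl
  have wit₁ := inner_compD_wtD_sub_one_neg n (by omega)
  have wit₂ := inner_compD_wtD_self_neg n (by omega)
  have mem₁ : ∀ m ∈ (List.range (n - 1)).map (· + 1), 1 ≤ m ∧ m ≤ n := by
    simp only [List.mem_map, List.mem_range]
    omega
  have mem₂ : ∀ m ∈ (List.range (n - 2)).map (· + 1) ++ [n], 1 ≤ m ∧ m ≤ n := by
    simp only [List.mem_append, List.mem_map, List.mem_range, List.mem_singleton]
    rintro m (⟨x, hx, rfl⟩ | rfl) <;> omega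
  refine ⟨fun k _ _ l _ => lower k l,
    ⟨⟨_, mem₁, by simp, wit₁⟩, fun _ ⟨l, _, hlen, hl⟩ => hlen ▸ lower _ l hl⟩,
    ⟨⟨_, mem₂, by simp; omega, wit₂⟩, fun _ ⟨l, _, hlen, hl⟩ => hlen ▸ lower _ l hl⟩,
    fun k _ _ hk₁ hk₂ l _ hl => ?_, wit₁, wit₂⟩
  have := le_length_of_inner_compD_neg n (by omega) (le_negCost_wtD n k (by omega)) l hl
  omega
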